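/- arXiv:2205.04794 — 7 statements merged into one kernel-verified Lean document; each statement's English description precedes it below -/
import Mathlib

section
/- Let C be a bounded operator on a Banach space X with ‖C‖ ≤ 1. Then for every x ∈ X and every natural number n, ‖(Cⁿ - e^{n(C - I)}) x‖ ≤ √n · ‖(C - I) x‖. -/
open NormedSpace

set_option synthInstance.maxHeartbeats 1000000
set_option maxHeartbeats 2000000

lemma pow_apply_bound {X : Type*} [NormedAddCommGroup X] [NormedSpace ℝ X]
    (C : X →L[ℝ] X) (hC : ‖C‖ ≤ 1) (m : ℕ) (y : X) : ‖(C ^ m) y‖ ≤ ‖y‖ := by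
  induction m with
  | zero => simp
  | succ m ih =>
    rw [pow_succ', ContinuousLinearMap.mul_apply]
    calc ‖C ((C ^ m) y)‖ ≤ ‖C‖ * ‖(C ^ m) y‖ := C.le_opNorm _
      _ ≤ 1 * ‖y‖ := mul_le_mul hC ih (norm_nonneg _) zero_le_one
      _ = ‖y‖ := one_mul _

lemma pow_diff_bound {X : Type*} [NormedAddCommGroup X] [NormedSpace ℝ X]
    (C : X →L[ℝ] X) (hC : ‖C‖ ≤ 1) (x : X) (k d : ℕ) :
    ‖(C ^ (k + d) - C ^ k) x‖ ≤ d * ‖(C - 1) x‖ := by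
  induction d with
  | zero => simp
  | succ d ih =>
    have h1 : (C ^ (k + (d+1)) - C ^ k) x
        = (C ^ (k+d)) ((C - 1) x) + (C ^ (k + d) - C ^ k) x := by
      simp [pow_succ, sub_mul, ContinuousLinearMap.sub_apply, ContinuousLinearMap.mul_apply]
      abel
    calc ‖(C ^ (k + (d+1)) - C ^ k) x‖
        ≤ ‖(C ^ (k+d)) ((C - 1) x)‖ + ‖(C ^ (k + d) - C ^ k) x‖ := by
          rw [h1]; exact norm_add_le _ _
      _ ≤ ‖(C - 1) x‖ + d * ‖(C - 1) x‖ :=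
          add_le_add (pow_apply_bound C hC _ _) ih
      _ = (d+1 : ℕ) * ‖(C - 1) x‖ := by push_cast; ring

lemma pow_diff_bound' {X : Type*} [NormedAddCommGroup X] [NormedSpace ℝ X]
    (C : X →L[ℝ] X) (hC : ‖C‖ ≤ 1) (x : X) (m k : ℕ) :
    ‖(C ^ m - C ^ k) x‖ ≤ |(m:ℝ) - k| * ‖(C - 1) x‖ := by
  rcases le_total k m with h | h
  · obtain ⟨d, rfl⟩ := Nat.exists_eq_add_of_le h
    have := pow_diff_bound C hC x k d
    calc ‖(C ^ (k+d) - C ^ k) x‖ ≤ d * ‖(C - 1) x‖ := this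
      _ = |((k+d:ℕ):ℝ) - k| * ‖(C - 1) x‖ := by
          push_cast; rw [add_sub_cancel_left, abs_of_nonneg (by positivity)]
  · obtain ⟨d, rfl⟩ := Nat.exists_eq_add_of_le h
    have := pow_diff_bound C hC x m d
    calc ‖(C ^ m - C ^ (m+d)) x‖ = ‖(C ^ (m+d) - C ^ m) x‖ := by
          rw [← norm_neg]; congr 1; simp
      _ ≤ d * ‖(C - 1) x‖ := this
      _ = |(m:ℝ) - (m+d:ℕ)| * ‖(C - 1) x‖ := by
          push_cast; rw [abs_sub_comm, add_sub_cancel_left, abs_of_nonneg (by positivity)]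


lemma sum0 (a : ℝ) : ∑' k : ℕ, a ^ k / k.factorial = Real.exp a := by
  rw [Real.exp_eq_exp_ℝ, exp_eq_tsum_div]

lemma summable0 (a : ℝ) : Summable (fun k : ℕ => a ^ k / k.factorial) :=
  Real.summable_pow_div_factorial a

lemma shift1 (a : ℝ) (k : ℕ) :
    ((k:ℝ) + 1) * a ^ (k+1) / (k+1).factorial = a * (a ^ k / k.factorial) := by
  rw [Nat.factorial_succ]
  have h1 : ((k:ℝ)+1) ≠ 0 := by positivity
  have h2 : (k.factorial : ℝ) ≠ 0 := by positivity
  push_cast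
  field_simp
  ring

lemma summable1 (a : ℝ) : Summable (fun k : ℕ => (k : ℝ) * a ^ k / k.factorial) := by
  rw [← summable_nat_add_iff 1]
  exact ((summable0 a).mul_left a).congr fun k => by push_cast; exact (shift1 a k).symm

lemma sum1 (a : ℝ) : ∑' k : ℕ, (k : ℝ) * a ^ k / k.factorial = a * Real.exp a := by
  rw [Summable.tsum_eq_zero_add (summable1 a)]
  have : ∑' k : ℕ, ((k+1 : ℕ) : ℝ) * a ^ (k+1) / (k+1).factorial
      = ∑' k : ℕ, a * (a ^ k / k.factorial) :=
    tsum_congr fun k => by push_cast; exact shift1 a k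
  rw [this, tsum_mul_left, sum0]
  norm_num

lemma shift2 (a : ℝ) (k : ℕ) :
    ((k:ℝ) + 1)^2 * a ^ (k+1) / (k+1).factorial
      = a * ((k : ℝ) * a ^ k / k.factorial + a ^ k / k.factorial) := by
  rw [Nat.factorial_succ]
  have h1 : ((k:ℝ)+1) ≠ 0 := by positivity
  have h2 : (k.factorial : ℝ) ≠ 0 := by positivity
  push_cast
  field_simp
  ring

lemma summable2 (a : ℝ) : Summable (fun k : ℕ => (k : ℝ)^2 * a ^ k / k.factorial) := by
  rw [← summable_nat_add_iff 1]
  exact (((summable1 a).add (summable0 a)).mul_left a).congr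
    fun k => by push_cast; exact (shift2 a k).symm

lemma sum2 (a : ℝ) : ∑' k : ℕ, (k : ℝ)^2 * a ^ k / k.factorial = (a^2 + a) * Real.exp a := by
  rw [Summable.tsum_eq_zero_add (summable2 a)]
  have : ∑' k : ℕ, ((k+1 : ℕ) : ℝ)^2 * a ^ (k+1) / (k+1).factorial
      = ∑' k : ℕ, a * ((k : ℝ) * a ^ k / k.factorial + a ^ k / k.factorial) :=
    tsum_congr fun k => by push_cast; exact shift2 a k
  rw [this, tsum_mul_left, Summable.tsum_add (summable1 a) (summable0 a), sum1, sum0]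
  norm_num
  ring


lemma summable_var (a : ℝ) : Summable (fun k : ℕ => (a ^ k / k.factorial) * (a - k)^2) := by
  have h : ∀ k : ℕ, (a ^ k / k.factorial) * (a - k)^2
      = a^2 * (a ^ k / k.factorial) - 2*a * ((k:ℝ) * a ^ k / k.factorial)
        + (k:ℝ)^2 * a ^ k / k.factorial := by
    intro k; ring
  exact (((((summable0 a).mul_left (a^2)).sub ((summable1 a).mul_left (2*a))).add
    (summable2 a))).congr fun k => (h k).symm

lemma sum_var (a : ℝ) : ∑' k : ℕ, (a ^ k / k.factorial) * (a - k)^2 = a * Real.exp a := by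
  have h : ∀ k : ℕ, (a ^ k / k.factorial) * (a - k)^2
      = a^2 * (a ^ k / k.factorial) - 2*a * ((k:ℝ) * a ^ k / k.factorial)
        + (k:ℝ)^2 * a ^ k / k.factorial := by
    intro k; ring
  rw [tsum_congr h,
    Summable.tsum_add ((((summable0 a).mul_left (a^2)).sub ((summable1 a).mul_left (2*a)))) (summable2 a),
    Summable.tsum_sub ((summable0 a).mul_left (a^2)) ((summable1 a).mul_left (2*a)),
    tsum_mul_left, tsum_mul_left, sum0, sum1, sum2]
  ring

lemma summable_absdev (a : ℝ) (ha : 0 ≤ a) :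
    Summable (fun k : ℕ => (a ^ k / k.factorial) * |a - k|) := by
  refine Summable.of_nonneg_of_le (fun k => by positivity) ?_
    (((summable0 a).mul_left a).add (summable1 a))
  intro k
  have h1 : |a - (k:ℝ)| ≤ a + k := by
    calc |a - (k:ℝ)| ≤ |a| + |(k:ℝ)| := abs_sub a (k:ℝ)
      _ = a + k := by rw [abs_of_nonneg ha, abs_of_nonneg (by positivity)]
  have hq : (0:ℝ) ≤ a ^ k / k.factorial := by positivity
  calc (a ^ k / k.factorial) * |a - k| ≤ (a ^ k / k.factorial) * (a + k) :=
        mul_le_mul_of_nonneg_left h1 hq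
    _ = a * (a ^ k / k.factorial) + (k:ℝ) * a ^ k / k.factorial := by ring

lemma cs_bound (a : ℝ) (ha : 0 ≤ a) :
    ∑' k : ℕ, (a ^ k / k.factorial) * |a - k| ≤ Real.sqrt a * Real.exp a := by
  apply Summable.tsum_le_of_sum_le (summable_absdev a ha)
  intro s
  have hq : ∀ k : ℕ, (0:ℝ) ≤ a ^ k / k.factorial := fun k => by positivity
  have step1 : ∀ k : ℕ, (a ^ k / k.factorial) * |a - k|
      = Real.sqrt (a ^ k / k.factorial) * Real.sqrt ((a ^ k / k.factorial) * (a - k)^2) := by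
    intro k
    rw [Real.sqrt_mul (hq k), Real.sqrt_sq_eq_abs, ← mul_assoc,
      Real.mul_self_sqrt (hq k)]
  calc ∑ k ∈ s, (a ^ k / k.factorial) * |a - k|
      = ∑ k ∈ s, Real.sqrt (a ^ k / k.factorial)
          * Real.sqrt ((a ^ k / k.factorial) * (a - k)^2) :=
        Finset.sum_congr rfl fun k _ => step1 k
    _ ≤ Real.sqrt (∑ k ∈ s, a ^ k / k.factorial)
          * Real.sqrt (∑ k ∈ s, (a ^ k / k.factorial) * (a - k)^2) :=
        Real.sum_sqrt_mul_sqrt_le s (fun k => hq k) (fun k => by positivity)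
    _ ≤ Real.sqrt (Real.exp a) * Real.sqrt (a * Real.exp a) := by
        gcongr
        · exact sum0 a ▸ Summable.sum_le_tsum s (fun k _ => hq k) (summable0 a)
        · exact sum_var a ▸ Summable.sum_le_tsum s (fun k _ => by positivity) (summable_var a)
    _ = Real.sqrt a * Real.exp a := by
        rw [← Real.sqrt_mul (Real.exp_nonneg a), mul_comm a (Real.exp a), ← mul_assoc,
          Real.sqrt_mul (by positivity), Real.sqrt_mul_self (Real.exp_nonneg a)]
        ring


/-- Chernoff's √n-Lemma: for a contraction `C` on a Banach space `X`,
`‖(Cⁿ - e^{n(C-1)}) x‖ ≤ √n ‖(C-1) x‖`. -/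
theorem chernoff_sqrt_n_lemma {X : Type*} [NormedAddCommGroup X] [NormedSpace ℝ X]
    [CompleteSpace X] (C : X →L[ℝ] X) (hC : ‖C‖ ≤ 1) (x : X) (n : ℕ) :
    ‖(C ^ n - exp ((n : ℝ) • (C - 1))) x‖ ≤ Real.sqrt n * ‖(C - 1) x‖ := by
  set a : ℝ := (n : ℝ) with ha_def
  have ha : 0 ≤ a := Nat.cast_nonneg n
  set e : ℝ := Real.exp (-a) with he_def
  have he : 0 ≤ e := Real.exp_nonneg _
  -- split the exponential
  have h_exp : exp (a • (C - 1)) = e • exp (a • C) := by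
    have hsplit : a • (C - 1) = (-a) • (1 : X →L[ℝ] X) + a • C := by
      rw [smul_sub]; module
    have hcomm : Commute ((-a) • (1 : X →L[ℝ] X)) (a • C) :=
      ((Commute.one_left (a • C)).smul_left (-a))
    have h1 : exp ((-a) • (1 : X →L[ℝ] X)) = e • 1 := by
      rw [← Algebra.algebraMap_eq_smul_one, ← algebraMap_exp_comm,
        ← Real.exp_eq_exp_ℝ, he_def, Algebra.algebraMap_eq_smul_one]
    rw [hsplit, exp_add_of_commute_of_mem_ball (𝕂 := ℝ) hcomm
      ((expSeries_radius_eq_top ℝ (X →L[ℝ] X)).symm ▸ edist_lt_top _ _)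
      ((expSeries_radius_eq_top ℝ (X →L[ℝ] X)).symm ▸ edist_lt_top _ _), h1, smul_mul_assoc, one_mul]
  -- HasSum for the exponential applied to x
  have hop : HasSum (fun k : ℕ => (a ^ k / k.factorial) • ((C ^ k) x)) (exp (a • C) x) := by
    have h := (exp_series_hasSum_exp' (𝕂 := ℝ) (a • C)).mapL (ContinuousLinearMap.apply ℝ X x)
    refine h.congr_fun fun k => ?_
    simp only [ContinuousLinearMap.apply_apply, smul_pow, ContinuousLinearMap.smul_apply,
      smul_smul]
    congr 1
    rw [div_eq_inv_mul]
  have h1 : HasSum (fun k : ℕ => (e * (a ^ k / k.factorial)) • ((C ^ k) x))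
      ((exp (a • (C - 1))) x) := by
    have := hop.const_smul e
    rw [← ContinuousLinearMap.smul_apply, ← h_exp] at this
    refine this.congr_fun fun k => ?_
    rw [smul_smul]
  have h2 : HasSum (fun k : ℕ => (e * (a ^ k / k.factorial)) • ((C ^ n) x)) ((C ^ n) x) := by
    have hs : HasSum (fun k : ℕ => e * (a ^ k / k.factorial)) 1 := by
      have := (summable0 a).hasSum
      rw [sum0 a] at this
      have h := this.const_smul e
      simp only [smul_eq_mul] at h
      rwa [he_def, ← Real.exp_add, neg_add_cancel, Real.exp_zero] at h
    simpa using hs.smul_const ((C ^ n) x)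
  have h3 : HasSum (fun k : ℕ => (e * (a ^ k / k.factorial)) • ((C ^ n - C ^ k) x))
      ((C ^ n - exp (a • (C - 1))) x) := by
    have := h2.sub h1
    rw [← ContinuousLinearMap.sub_apply] at this
    refine this.congr_fun fun k => ?_
    rw [ContinuousLinearMap.sub_apply, smul_sub]
  -- norm bound
  have hbound : ∀ k : ℕ, ‖(e * (a ^ k / k.factorial)) • ((C ^ n - C ^ k) x)‖
      ≤ e * ((a ^ k / k.factorial) * |a - k|) * ‖(C - 1) x‖ := by
    intro k
    rw [norm_smul, Real.norm_eq_abs, abs_of_nonneg (by positivity)]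
    calc e * (a ^ k / k.factorial) * ‖(C ^ n - C ^ k) x‖
        ≤ e * (a ^ k / k.factorial) * (|a - k| * ‖(C - 1) x‖) := by
          gcongr
          exact pow_diff_bound' C hC x n k
      _ = e * ((a ^ k / k.factorial) * |a - k|) * ‖(C - 1) x‖ := by ring
  have hmaj : Summable (fun k : ℕ => e * ((a ^ k / k.factorial) * |a - k|) * ‖(C - 1) x‖) :=
    (((summable_absdev a ha).mul_left e).mul_right _)
  have hnorm_summable : Summable (fun k : ℕ => ‖(e * (a ^ k / k.factorial)) • ((C ^ n - C ^ k) x)‖) :=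
    Summable.of_nonneg_of_le (fun k => norm_nonneg _) hbound hmaj
  calc ‖(C ^ n - exp (a • (C - 1))) x‖
      = ‖∑' k : ℕ, (e * (a ^ k / k.factorial)) • ((C ^ n - C ^ k) x)‖ := by rw [h3.tsum_eq]
    _ ≤ ∑' k : ℕ, ‖(e * (a ^ k / k.factorial)) • ((C ^ n - C ^ k) x)‖ :=
        norm_tsum_le_tsum_norm hnorm_summable
    _ ≤ ∑' k : ℕ, e * ((a ^ k / k.factorial) * |a - k|) * ‖(C - 1) x‖ :=
        Summable.tsum_le_tsum hbound hnorm_summable hmaj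
    _ = e * (∑' k : ℕ, (a ^ k / k.factorial) * |a - k|) * ‖(C - 1) x‖ := by
        rw [tsum_mul_right, tsum_mul_left]
    _ ≤ e * (Real.sqrt a * Real.exp a) * ‖(C - 1) x‖ := by
        gcongr
        exact cs_bound a ha
    _ = Real.sqrt a * ‖(C - 1) x‖ := by
        have h4 : Real.exp (-a) * Real.exp a = 1 := by
          rw [← Real.exp_add, neg_add_cancel, Real.exp_zero]
        rw [he_def]
        linear_combination Real.sqrt a * ‖(C - 1) x‖ * h4
end

section
/- Let C be a contraction on a Banach space X. Then for every x ∈ X, every n ∈ ℕ, and every ε > 0, ‖(Cⁿ - e^{n(C - I)}) x‖ ≤ (2n/ε²)‖x‖ + ε‖(I - C)x‖. -/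
set_option maxHeartbeats 1000000
set_option synthInstance.maxHeartbeats 400000

open NormedSpace

section CVEHelpers

variable {X : Type*} [NormedAddCommGroup X] [NormedSpace ℝ X]

private lemma cve_contr_apply (C : X →L[ℝ] X) (hC : ‖C‖ ≤ 1) (y : X) : ‖C y‖ ≤ ‖y‖ :=
  (C.le_opNorm y).trans (by nlinarith [norm_nonneg y])

private lemma cve_pow_apply (C : X →L[ℝ] X) (hC : ‖C‖ ≤ 1) (k : ℕ) (y : X) :
    ‖(C ^ k) y‖ ≤ ‖y‖ := by
  induction k with
  | zero => simp
  | succ k ih =>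
    have h1 : (C ^ (k + 1)) y = C ((C ^ k) y) := by
      rw [pow_succ']; rfl
    rw [h1]
    exact (cve_contr_apply C hC _).trans ih

private lemma cve_telescope (C : X →L[ℝ] X) (hC : ‖C‖ ≤ 1) (x : X) (k : ℕ) :
    ‖x - (C ^ k) x‖ ≤ k * ‖(1 - C) x‖ := by
  induction k with
  | zero => simp
  | succ k ih =>
    have h1 : (C ^ (k + 1)) x = C ((C ^ k) x) := by rw [pow_succ']; rfl
    have h2 : C x - (C ^ (k + 1)) x = C (x - (C ^ k) x) := by rw [h1, map_sub]
    have h3 : ‖x - (C ^ (k + 1)) x‖ ≤ ‖x - C x‖ + ‖C x - (C ^ (k + 1)) x‖ := by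
      have := dist_triangle x (C x) ((C ^ (k + 1)) x)
      simpa [dist_eq_norm] using this
    rw [h2] at h3
    have h4 : ‖C (x - (C ^ k) x)‖ ≤ ‖x - (C ^ k) x‖ := cve_contr_apply C hC _
    have h5 : ‖(1 - C) x‖ = ‖x - C x‖ := by congr 1
    rw [h5] at ih ⊢
    have hc : ((k + 1 : ℕ) : ℝ) = (k : ℝ) + 1 := by push_cast; ring
    rw [hc]
    linarith

private lemma cve_pow_diff (C : X →L[ℝ] X) (hC : ‖C‖ ≤ 1) (x : X) (n m : ℕ) :
    ‖(C ^ n) x - (C ^ m) x‖ ≤ |(n : ℝ) - m| * ‖(1 - C) x‖ := by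
  wlog h : m ≤ n with H
  · push_neg at h
    rw [norm_sub_rev, abs_sub_comm]
    exact H C hC x m n h.le
  · have hpow : C ^ m * C ^ (n - m) = C ^ n := by
      rw [← pow_add]
      congr 1
      omega
    have key : (C ^ n) x - (C ^ m) x = (C ^ m) ((C ^ (n - m)) x - x) := by
      rw [map_sub, ← ContinuousLinearMap.mul_apply, hpow]
    have habs : |(n : ℝ) - m| = ((n - m : ℕ) : ℝ) := by
      rw [Nat.cast_sub h, abs_of_nonneg]
      have : (m : ℝ) ≤ (n : ℝ) := Nat.cast_le.mpr h
      linarith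
    rw [key, habs]
    refine (cve_pow_apply C hC m _).trans ?_
    rw [norm_sub_rev]
    exact cve_telescope C hC x (n - m)

end CVEHelpers

section CVEPoisson

private lemma cve_sum0 (t : ℝ) : Summable (fun m : ℕ => t ^ m / (Nat.factorial m : ℝ)) :=
  Real.summable_pow_div_factorial t

private lemma cve_exp (t : ℝ) : ∑' m : ℕ, t ^ m / (Nat.factorial m : ℝ) = Real.exp t := by
  rw [Real.exp_eq_exp_ℝ, exp_eq_tsum_div]

private lemma cve_shift1 (t : ℝ) (k : ℕ) :
    ((k + 1 : ℕ) : ℝ) * (t ^ (k + 1) / (Nat.factorial (k + 1) : ℝ))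
      = t * (t ^ k / (Nat.factorial k : ℝ)) := by
  have hk : (Nat.factorial k : ℝ) ≠ 0 := Nat.cast_ne_zero.mpr (Nat.factorial_ne_zero k)
  rw [Nat.factorial_succ]
  push_cast
  field_simp
  ring

private lemma cve_shift2 (t : ℝ) (k : ℕ) :
    ((k + 2 : ℕ) : ℝ) * (((k + 2 : ℕ) : ℝ) - 1) * (t ^ (k + 2) / (Nat.factorial (k + 2) : ℝ))
      = t ^ 2 * (t ^ k / (Nat.factorial k : ℝ)) := by
  have hk : (Nat.factorial k : ℝ) ≠ 0 := Nat.cast_ne_zero.mpr (Nat.factorial_ne_zero k)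
  have h2 : Nat.factorial (k + 2) = (k + 2) * ((k + 1) * Nat.factorial k) := by
    rw [Nat.factorial_succ, Nat.factorial_succ]
  rw [h2]
  push_cast
  field_simp
  ring

private lemma cve_sum1 (t : ℝ) :
    Summable (fun m : ℕ => (m : ℝ) * (t ^ m / (Nat.factorial m : ℝ))) := by
  have h : Summable (fun k : ℕ =>
      ((k + 1 : ℕ) : ℝ) * (t ^ (k + 1) / (Nat.factorial (k + 1) : ℝ))) :=
    ((cve_sum0 t).mul_left t).congr fun k => (cve_shift1 t k).symm
  exact (summable_nat_add_iff 1).mp h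

private lemma cve_tsum1 (t : ℝ) :
    ∑' m : ℕ, (m : ℝ) * (t ^ m / (Nat.factorial m : ℝ)) = t * Real.exp t := by
  rw [(cve_sum1 t).tsum_eq_zero_add]
  simp only [Nat.cast_zero, zero_mul, zero_add]
  rw [tsum_congr (fun k => cve_shift1 t k), tsum_mul_left, cve_exp]

private lemma cve_sum2 (t : ℝ) :
    Summable (fun m : ℕ => (m : ℝ) * ((m : ℝ) - 1) * (t ^ m / (Nat.factorial m : ℝ))) := by
  have h : Summable (fun k : ℕ =>
      ((k + 2 : ℕ) : ℝ) * (((k + 2 : ℕ) : ℝ) - 1) * (t ^ (k + 2) / (Nat.factorial (k + 2) : ℝ))) :=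
    ((cve_sum0 t).mul_left (t ^ 2)).congr fun k => (cve_shift2 t k).symm
  exact (summable_nat_add_iff 2).mp h

private lemma cve_tsum2 (t : ℝ) :
    ∑' m : ℕ, (m : ℝ) * ((m : ℝ) - 1) * (t ^ m / (Nat.factorial m : ℝ))
      = t ^ 2 * Real.exp t := by
  rw [← (cve_sum2 t).sum_add_tsum_nat_add 2]
  rw [tsum_congr (fun k => cve_shift2 t k), tsum_mul_left, cve_exp]
  norm_num [Finset.sum_range_succ]

private lemma cve_moment_summable (t : ℝ) :
    Summable (fun m : ℕ => t ^ m / (Nat.factorial m : ℝ) * ((m : ℝ) - t) ^ 2) := by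
  have h : Summable (fun m : ℕ =>
      (m : ℝ) * ((m : ℝ) - 1) * (t ^ m / (Nat.factorial m : ℝ))
        + (1 - 2 * t) * ((m : ℝ) * (t ^ m / (Nat.factorial m : ℝ)))
        + t ^ 2 * (t ^ m / (Nat.factorial m : ℝ))) :=
    ((cve_sum2 t).add ((cve_sum1 t).mul_left (1 - 2 * t))).add ((cve_sum0 t).mul_left (t ^ 2))
  exact h.congr fun m => by ring

private lemma cve_moment (t : ℝ) :
    ∑' m : ℕ, t ^ m / (Nat.factorial m : ℝ) * ((m : ℝ) - t) ^ 2 = t * Real.exp t := by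
  have hpt : ∀ m : ℕ, t ^ m / (Nat.factorial m : ℝ) * ((m : ℝ) - t) ^ 2
      = (m : ℝ) * ((m : ℝ) - 1) * (t ^ m / (Nat.factorial m : ℝ))
        + (1 - 2 * t) * ((m : ℝ) * (t ^ m / (Nat.factorial m : ℝ)))
        + t ^ 2 * (t ^ m / (Nat.factorial m : ℝ)) := fun m => by ring
  rw [tsum_congr hpt,
    Summable.tsum_add ((cve_sum2 t).add ((cve_sum1 t).mul_left (1 - 2 * t))) ((cve_sum0 t).mul_left (t ^ 2)),
    Summable.tsum_add (cve_sum2 t) ((cve_sum1 t).mul_left (1 - 2 * t)),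
    tsum_mul_left, tsum_mul_left, cve_tsum2, cve_tsum1, cve_exp]
  ring

end CVEPoisson

/-- Variational Chernoff estimate: for a contraction `C` on a Banach space,
`‖(Cⁿ - e^{n(C-1)}) x‖ ≤ (2n/ε²)‖x‖ + ε‖(1-C)x‖` for every `ε > 0`. -/
theorem chernoff_variational_estimate {X : Type*} [NormedAddCommGroup X] [NormedSpace ℝ X]
    [CompleteSpace X] (C : X →L[ℝ] X) (hC : ‖C‖ ≤ 1) (x : X) (n : ℕ) (ε : ℝ) (hε : 0 < ε) :
    ‖(C ^ n - exp ((n : ℝ) • (C - 1))) x‖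
      ≤ 2 * n / ε ^ 2 * ‖x‖ + ε * ‖(1 - C) x‖ := by
  have ht0 : (0 : ℝ) ≤ (n : ℝ) := Nat.cast_nonneg n
  have hD0 : (0 : ℝ) ≤ ‖(1 - C) x‖ := norm_nonneg _
  have hq : ∀ m : ℕ, 0 ≤ (n : ℝ) ^ m / (Nat.factorial m : ℝ) := fun m =>
    div_nonneg (pow_nonneg ht0 m) (Nat.cast_nonneg _)
  -- Step A : split the exponential
  have hsplit : exp ((n : ℝ) • (C - 1)) = Real.exp (-(n : ℝ)) • exp ((n : ℝ) • C) := by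
    have h1 : (n : ℝ) • (C - 1) = (-(n : ℝ)) • (1 : X →L[ℝ] X) + (n : ℝ) • C := by
      rw [smul_sub, neg_smul]; abel
    rw [h1, exp_add_of_commute_of_mem_ball (𝕂 := ℝ) ((Commute.one_left ((n : ℝ) • C)).smul_left (-(n : ℝ)))
      ((expSeries_radius_eq_top ℝ (X →L[ℝ] X)).symm ▸ edist_lt_top _ _)
      ((expSeries_radius_eq_top ℝ (X →L[ℝ] X)).symm ▸ edist_lt_top _ _)]
    have h2 : (-(n : ℝ)) • (1 : X →L[ℝ] X) = algebraMap ℝ (X →L[ℝ] X) (-(n : ℝ)) :=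
      (Algebra.algebraMap_eq_smul_one (-(n : ℝ))).symm
    rw [h2, ← algebraMap_exp_comm, ← Real.exp_eq_exp_ℝ, Algebra.algebraMap_eq_smul_one,
      smul_mul_assoc, one_mul]
  -- Step B : expand exp(nC) as a series
  have hBsum : Summable (fun m : ℕ => ((n : ℝ) ^ m / (Nat.factorial m : ℝ)) • C ^ m) := by
    refine (expSeries_summable' (𝕂 := ℝ) ((n : ℝ) • C)).congr fun m => ?_
    rw [smul_pow, smul_smul, inv_mul_eq_div]
  have hB : exp ((n : ℝ) • C) = ∑' m : ℕ, ((n : ℝ) ^ m / (Nat.factorial m : ℝ)) • C ^ m := by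
    rw [exp_eq_tsum ℝ]
    exact tsum_congr fun m => by rw [smul_pow, smul_smul, inv_mul_eq_div]
  have hBx : exp ((n : ℝ) • C) x
      = ∑' m : ℕ, ((n : ℝ) ^ m / (Nat.factorial m : ℝ)) • ((C ^ m) x) := by
    have h := (ContinuousLinearMap.apply ℝ X x).map_tsum hBsum
    simp only [ContinuousLinearMap.apply_apply, ContinuousLinearMap.smul_apply] at h
    rw [hB]
    exact h
  -- vector-level summabilities
  have hux : Summable (fun m : ℕ => ((n : ℝ) ^ m / (Nat.factorial m : ℝ)) • ((C ^ m) x)) := by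
    refine Summable.of_norm_bounded ((cve_sum0 (n : ℝ)).mul_right ‖x‖) fun m => ?_
    rw [norm_smul, Real.norm_eq_abs, abs_of_nonneg (hq m)]
    exact mul_le_mul_of_nonneg_left (cve_pow_apply C hC m x) (hq m)
  have hcx : Summable (fun m : ℕ => ((n : ℝ) ^ m / (Nat.factorial m : ℝ)) • ((C ^ n) x)) :=
    (cve_sum0 (n : ℝ)).smul_const _
  have hvx : Summable
      (fun m : ℕ => ((n : ℝ) ^ m / (Nat.factorial m : ℝ)) • ((C ^ n) x - (C ^ m) x)) :=
    (hcx.sub hux).congr fun m => (smul_sub _ _ _).symm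
  -- key identity
  have hCn : (C ^ n) x = Real.exp (-(n : ℝ)) •
      ∑' m : ℕ, ((n : ℝ) ^ m / (Nat.factorial m : ℝ)) • ((C ^ n) x) := by
    rw [Summable.tsum_smul_const (cve_sum0 (n : ℝ)), cve_exp, smul_smul, ← Real.exp_add,
      neg_add_cancel, Real.exp_zero, one_smul]
  have hkey : (C ^ n - exp ((n : ℝ) • (C - 1))) x
      = Real.exp (-(n : ℝ)) •
        ∑' m : ℕ, ((n : ℝ) ^ m / (Nat.factorial m : ℝ)) • ((C ^ n) x - (C ^ m) x) := by
    rw [ContinuousLinearMap.sub_apply, hsplit, ContinuousLinearMap.smul_apply, hBx]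
    nth_rewrite 1 [hCn]
    rw [← smul_sub, ← Summable.tsum_sub hcx hux]
    congr 1
    exact tsum_congr fun m => (smul_sub _ _ _).symm
  -- per-term estimate
  have hK0 : (0 : ℝ) ≤ 2 * ‖x‖ / ε ^ 2 := by positivity
  have hterm : ∀ m : ℕ, ‖(C ^ n) x - (C ^ m) x‖
      ≤ ε * ‖(1 - C) x‖ + 2 * ‖x‖ / ε ^ 2 * ((m : ℝ) - (n : ℝ)) ^ 2 := by
    intro m
    have hsq : 0 ≤ 2 * ‖x‖ / ε ^ 2 * ((m : ℝ) - (n : ℝ)) ^ 2 := mul_nonneg hK0 (sq_nonneg _)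
    rcases le_or_gt |(m : ℝ) - (n : ℝ)| ε with h | h
    · have h1 := cve_pow_diff C hC x n m
      have h2 : |(n : ℝ) - (m : ℝ)| = |(m : ℝ) - (n : ℝ)| := abs_sub_comm _ _
      rw [h2] at h1
      have h3 : |(m : ℝ) - (n : ℝ)| * ‖(1 - C) x‖ ≤ ε * ‖(1 - C) x‖ :=
        mul_le_mul_of_nonneg_right h hD0
      linarith
    · have h2 : ‖(C ^ n) x - (C ^ m) x‖ ≤ 2 * ‖x‖ := by
        calc ‖(C ^ n) x - (C ^ m) x‖ ≤ ‖(C ^ n) x‖ + ‖(C ^ m) x‖ := norm_sub_le _ _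
          _ ≤ ‖x‖ + ‖x‖ := add_le_add (cve_pow_apply C hC n x) (cve_pow_apply C hC m x)
          _ = 2 * ‖x‖ := by ring
      have h3 : ε ^ 2 ≤ ((m : ℝ) - (n : ℝ)) ^ 2 := by
        have := sq_abs ((m : ℝ) - (n : ℝ))
        nlinarith [abs_nonneg ((m : ℝ) - (n : ℝ))]
      have h4 : 2 * ‖x‖ ≤ 2 * ‖x‖ / ε ^ 2 * ((m : ℝ) - (n : ℝ)) ^ 2 := by
        rw [div_mul_eq_mul_div, le_div_iff₀ (by positivity)]
        nlinarith [norm_nonneg x]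
      nlinarith [mul_nonneg hε.le hD0]
  -- bound the sum of norms
  have hnormv : ∀ m : ℕ, ‖((n : ℝ) ^ m / (Nat.factorial m : ℝ)) • ((C ^ n) x - (C ^ m) x)‖
      ≤ (n : ℝ) ^ m / (Nat.factorial m : ℝ) * (ε * ‖(1 - C) x‖)
        + 2 * ‖x‖ / ε ^ 2 * ((n : ℝ) ^ m / (Nat.factorial m : ℝ) * ((m : ℝ) - (n : ℝ)) ^ 2) := by
    intro m
    rw [norm_smul, Real.norm_eq_abs, abs_of_nonneg (hq m)]
    calc (n : ℝ) ^ m / (Nat.factorial m : ℝ) * ‖(C ^ n) x - (C ^ m) x‖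
        ≤ (n : ℝ) ^ m / (Nat.factorial m : ℝ)
            * (ε * ‖(1 - C) x‖ + 2 * ‖x‖ / ε ^ 2 * ((m : ℝ) - (n : ℝ)) ^ 2) :=
          mul_le_mul_of_nonneg_left (hterm m) (hq m)
      _ = _ := by ring
  have hBsum' : Summable (fun m : ℕ =>
      (n : ℝ) ^ m / (Nat.factorial m : ℝ) * (ε * ‖(1 - C) x‖)
        + 2 * ‖x‖ / ε ^ 2 * ((n : ℝ) ^ m / (Nat.factorial m : ℝ) * ((m : ℝ) - (n : ℝ)) ^ 2)) :=
    ((cve_sum0 (n : ℝ)).mul_right (ε * ‖(1 - C) x‖)).add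
      ((cve_moment_summable (n : ℝ)).mul_left (2 * ‖x‖ / ε ^ 2))
  have hnormsum : Summable (fun m : ℕ =>
      ‖((n : ℝ) ^ m / (Nat.factorial m : ℝ)) • ((C ^ n) x - (C ^ m) x)‖) :=
    Summable.of_nonneg_of_le (fun m => norm_nonneg _) hnormv hBsum'
  have hexp1 : Real.exp (-(n : ℝ)) * Real.exp (n : ℝ) = 1 := by
    rw [← Real.exp_add, neg_add_cancel, Real.exp_zero]
  calc ‖(C ^ n - exp ((n : ℝ) • (C - 1))) x‖
      = Real.exp (-(n : ℝ)) *
        ‖∑' m : ℕ, ((n : ℝ) ^ m / (Nat.factorial m : ℝ)) • ((C ^ n) x - (C ^ m) x)‖ := by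
        rw [hkey, norm_smul, Real.norm_eq_abs, abs_of_nonneg (Real.exp_pos _).le]
    _ ≤ Real.exp (-(n : ℝ)) *
        ∑' m : ℕ, ‖((n : ℝ) ^ m / (Nat.factorial m : ℝ)) • ((C ^ n) x - (C ^ m) x)‖ :=
        mul_le_mul_of_nonneg_left (norm_tsum_le_tsum_norm hnormsum) (Real.exp_pos _).le
    _ ≤ Real.exp (-(n : ℝ)) *
        ∑' m : ℕ, ((n : ℝ) ^ m / (Nat.factorial m : ℝ) * (ε * ‖(1 - C) x‖)
          + 2 * ‖x‖ / ε ^ 2 * ((n : ℝ) ^ m / (Nat.factorial m : ℝ) * ((m : ℝ) - (n : ℝ)) ^ 2)) :=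
        mul_le_mul_of_nonneg_left (Summable.tsum_le_tsum hnormv hnormsum hBsum') (Real.exp_pos _).le
    _ = Real.exp (-(n : ℝ)) * (Real.exp (n : ℝ) * (ε * ‖(1 - C) x‖)
          + 2 * ‖x‖ / ε ^ 2 * ((n : ℝ) * Real.exp (n : ℝ))) := by
        rw [Summable.tsum_add ((cve_sum0 (n : ℝ)).mul_right (ε * ‖(1 - C) x‖))
            ((cve_moment_summable (n : ℝ)).mul_left (2 * ‖x‖ / ε ^ 2)),
          tsum_mul_right, tsum_mul_left, cve_exp, cve_moment]
    _ = 2 * n / ε ^ 2 * ‖x‖ + ε * ‖(1 - C) x‖ := by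
        have hrw : Real.exp (-(n : ℝ)) * (Real.exp (n : ℝ) * (ε * ‖(1 - C) x‖)
            + 2 * ‖x‖ / ε ^ 2 * ((n : ℝ) * Real.exp (n : ℝ)))
            = (Real.exp (-(n : ℝ)) * Real.exp (n : ℝ))
              * (ε * ‖(1 - C) x‖ + 2 * ‖x‖ / ε ^ 2 * (n : ℝ)) := by ring
        rw [hrw, hexp1, one_mul]
        ring
end

section
/- Let C be a contraction on a Banach space X. Then in operator norm, ‖Cⁿ - e^{n(C - I)}‖ ≤ (3/2) n^{1/3} ‖2(I - C)‖^{2/3} for all n ∈ ℕ. -/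
open NormedSpace
open scoped Nat

section Aux

variable {X : Type*} [NormedAddCommGroup X] [NormedSpace ℝ X] [CompleteSpace X]

lemma chernoff_aux_norm_pow_le (A : X →L[ℝ] X) (hA : ‖A‖ ≤ 1) (k : ℕ) : ‖A ^ k‖ ≤ 1 := by
  induction k with
  | zero =>
    simpa [ContinuousLinearMap.one_def] using ContinuousLinearMap.norm_id_le (𝕜 := ℝ) (E := X)
  | succ k ih =>
    calc ‖A ^ (k + 1)‖ = ‖A ^ k * A‖ := by rw [pow_succ]
      _ ≤ ‖A ^ k‖ * ‖A‖ := norm_mul_le _ _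
      _ ≤ 1 := by nlinarith [norm_nonneg (A ^ k), norm_nonneg A]

lemma chernoff_aux_norm_pow_le' (A : X →L[ℝ] X) (k : ℕ) : ‖A ^ k‖ ≤ ‖A‖ ^ k := by
  cases k with
  | zero =>
    simpa [ContinuousLinearMap.one_def] using ContinuousLinearMap.norm_id_le (𝕜 := ℝ) (E := X)
  | succ k => exact norm_pow_le' A k.succ_pos

lemma chernoff_aux_pow_sub_pow (A B : X →L[ℝ] X) (hA : ‖A‖ ≤ 1) (hB : ‖B‖ ≤ 1) (n : ℕ) :
    ‖A ^ n - B ^ n‖ ≤ n * ‖A - B‖ := by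
  induction n with
  | zero => simp
  | succ n ih =>
    have key : A ^ (n + 1) - B ^ (n + 1) = A * (A ^ n - B ^ n) + (A - B) * B ^ n := by
      simp only [mul_sub, sub_mul, ← pow_succ, ← pow_succ']
      abel
    rw [key]
    calc ‖A * (A ^ n - B ^ n) + (A - B) * B ^ n‖
        ≤ ‖A * (A ^ n - B ^ n)‖ + ‖(A - B) * B ^ n‖ := norm_add_le _ _
      _ ≤ ‖A‖ * ‖A ^ n - B ^ n‖ + ‖A - B‖ * ‖B ^ n‖ :=
          add_le_add (norm_mul_le _ _) (norm_mul_le _ _)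
      _ ≤ (n + 1 : ℕ) * ‖A - B‖ := by
          push_cast
          nlinarith [norm_nonneg A, norm_nonneg (A - B), norm_nonneg (A ^ n - B ^ n),
            chernoff_aux_norm_pow_le B hB n, norm_nonneg (B ^ n)]

set_option maxHeartbeats 1000000 in
/-- `‖exp(C-1)‖ ≤ 1` for a contraction `C`. -/
lemma chernoff_aux_norm_exp_le (C : X →L[ℝ] X) (hC : ‖C‖ ≤ 1) : ‖exp (C - 1)‖ ≤ 1 := by
  have hcomm : Commute C (-(1 : X →L[ℝ] X)) := by
    simp [Commute, SemiconjBy]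
  have h1 : exp (C - 1) = exp C * exp (-(1 : X →L[ℝ] X)) := by
    let +nondep : NormedAlgebra ℚ (X →L[ℝ] X) := .restrictScalars ℚ ℝ (X →L[ℝ] X)
    rw [sub_eq_add_neg, exp_add_of_commute hcomm]
  have h2 : exp (-(1 : X →L[ℝ] X)) = algebraMap ℝ (X →L[ℝ] X) (Real.exp (-1)) := by
    have : (-(1 : X →L[ℝ] X)) = algebraMap ℝ (X →L[ℝ] X) (-1) := by simp
    rw [this, ← algebraMap_exp_comm, Real.exp_eq_exp_ℝ]
  have hexpC : ‖exp C‖ ≤ Real.exp 1 := by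
    rw [exp_eq_tsum ℝ]
    refine le_trans (norm_tsum_le_tsum_norm (norm_expSeries_summable' C)) ?_
    have h3 : Real.exp 1 = ∑' k : ℕ, (1 : ℝ) ^ k / k ! := by
      rw [Real.exp_eq_exp_ℝ]
      exact congrFun (exp_eq_tsum_div (𝔸 := ℝ)) 1
    rw [h3]
    refine Summable.tsum_le_tsum ?_ (norm_expSeries_summable' C) (Real.summable_pow_div_factorial 1)
    intro k
    rw [norm_smul, norm_inv, Real.norm_natCast, div_eq_inv_mul, one_pow]
    have hk : (0 : ℝ) < (k ! : ℝ)⁻¹ := by positivity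
    have := chernoff_aux_norm_pow_le C hC k
    nlinarith [norm_nonneg (C ^ k)]
  calc ‖exp (C - 1)‖ = ‖exp C * exp (-(1 : X →L[ℝ] X))‖ := by rw [h1]
    _ ≤ ‖exp C‖ * ‖exp (-(1 : X →L[ℝ] X))‖ := norm_mul_le _ _
    _ ≤ Real.exp 1 * Real.exp (-1) := by
        have hB : ‖exp (-(1 : X →L[ℝ] X))‖ ≤ Real.exp (-1) := ?_
        · nlinarith [norm_nonneg (exp C), norm_nonneg (exp (-(1 : X →L[ℝ] X))),
            Real.exp_pos (-1 : ℝ), Real.exp_pos (1 : ℝ), hexpC]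
        · rw [h2, Algebra.algebraMap_eq_smul_one, norm_smul, Real.norm_eq_abs,
            abs_of_pos (Real.exp_pos _)]
          have hone : ‖(1 : X →L[ℝ] X)‖ ≤ 1 := by
            simpa [ContinuousLinearMap.one_def] using
              ContinuousLinearMap.norm_id_le (𝕜 := ℝ) (E := X)
          nlinarith [Real.exp_pos (-1 : ℝ)]
    _ = 1 := by rw [← Real.exp_add]; norm_num

set_option maxHeartbeats 1000000 in
/-- Quadratic remainder bound: `‖exp A - 1 - A‖ ≤ (9/8)‖A‖²` when `‖A‖ ≤ 2`. -/
lemma chernoff_aux_exp_remainder (A : X →L[ℝ] X) (hA : ‖A‖ ≤ 2) :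
    ‖exp A - 1 - A‖ ≤ 9 / 8 * ‖A‖ ^ 2 := by
  set f : ℕ → (X →L[ℝ] X) := fun k => (k !⁻¹ : ℝ) • A ^ k with hf
  have hsum : Summable f := expSeries_summable' (𝕂 := ℝ) A
  have hsumnorm : Summable fun k => ‖f k‖ := norm_expSeries_summable' (𝕂 := ℝ) A
  have hexp : exp A = ∑' k, f k := by
    rw [exp_eq_tsum ℝ]
  have hsplit : ∑ i ∈ Finset.range 2, f i + ∑' i, f (i + 2) = ∑' i, f i :=
    Summable.sum_add_tsum_nat_add 2 hsum
  have hfin : ∑ i ∈ Finset.range 2, f i = 1 + A := by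
    simp [hf, Finset.sum_range_succ, Nat.factorial]
  have hrem : exp A - 1 - A = ∑' i, f (i + 2) := by
    rw [hexp, ← hsplit, hfin]
    abel
  -- the real comparison series
  have hg : Summable fun i : ℕ => (2 : ℝ) ^ (i + 2) / (i + 2)! :=
    (summable_nat_add_iff 2).mpr (Real.summable_pow_div_factorial 2)
  have hgval : ∑' i : ℕ, (2 : ℝ) ^ (i + 2) / (i + 2)! = Real.exp 2 - 3 := by
    have hs : Summable fun n : ℕ => (2 : ℝ) ^ n / n ! := Real.summable_pow_div_factorial 2
    have h1 : ∑ i ∈ Finset.range 2, (2 : ℝ) ^ i / i ! + ∑' i : ℕ, (2 : ℝ) ^ (i + 2) / (i + 2)!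
        = ∑' n : ℕ, (2 : ℝ) ^ n / n ! := Summable.sum_add_tsum_nat_add 2 hs
    have h2 : ∑' n : ℕ, (2 : ℝ) ^ n / n ! = Real.exp 2 := by
      rw [Real.exp_eq_exp_ℝ]
      exact (congrFun (exp_eq_tsum_div (𝔸 := ℝ)) 2).symm
    have h3 : ∑ i ∈ Finset.range 2, (2 : ℝ) ^ i / i ! = 3 := by
      simp [Finset.sum_range_succ, Nat.factorial]
      norm_num
    linarith
  have hterm : ∀ i : ℕ, ‖f (i + 2)‖ ≤ ‖A‖ ^ 2 / 4 * ((2 : ℝ) ^ (i + 2) / (i + 2)!) := by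
    intro i
    have h1 : ‖f (i + 2)‖ = ((i + 2)! : ℝ)⁻¹ * ‖A ^ (i + 2)‖ := by
      simp only [hf]
      rw [norm_smul (((i + 2)! : ℝ))⁻¹ (A ^ (i + 2)), norm_inv, Real.norm_natCast]
    have h2 : ‖A ^ (i + 2)‖ ≤ ‖A‖ ^ 2 * 2 ^ i := by
      calc ‖A ^ (i + 2)‖ ≤ ‖A‖ ^ (i + 2) := chernoff_aux_norm_pow_le' A (i + 2)
        _ = ‖A‖ ^ 2 * ‖A‖ ^ i := by ring
        _ ≤ ‖A‖ ^ 2 * 2 ^ i :=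
            mul_le_mul_of_nonneg_left (pow_le_pow_left₀ (norm_nonneg A) hA i) (by positivity)
    rw [h1]
    have hpos : (0 : ℝ) < ((i + 2)! : ℝ) := by positivity
    rw [div_eq_mul_inv, pow_succ, pow_succ]
    calc ((i + 2)! : ℝ)⁻¹ * ‖A ^ (i + 2)‖ ≤ ((i + 2)! : ℝ)⁻¹ * (‖A‖ ^ 2 * 2 ^ i) := by
          gcongr
      _ = ‖A‖ ^ 2 / 4 * (2 ^ i * 2 * 2 * ((i + 2)! : ℝ)⁻¹) := by ring
  have hsumnorm2 : Summable fun i => ‖f (i + 2)‖ := (summable_nat_add_iff 2).mpr hsumnorm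
  have hbound : ‖∑' i, f (i + 2)‖ ≤ ‖A‖ ^ 2 / 4 * (Real.exp 2 - 3) := by
    calc ‖∑' i, f (i + 2)‖ ≤ ∑' i, ‖f (i + 2)‖ := norm_tsum_le_tsum_norm hsumnorm2
      _ ≤ ∑' i : ℕ, ‖A‖ ^ 2 / 4 * ((2 : ℝ) ^ (i + 2) / (i + 2)!) :=
          Summable.tsum_le_tsum hterm hsumnorm2 (hg.mul_left _)
      _ = ‖A‖ ^ 2 / 4 * (Real.exp 2 - 3) := by rw [tsum_mul_left, hgval]
  have hexp2 : Real.exp 2 ≤ 7.5 := by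
    have h1 : Real.exp 2 = Real.exp 1 * Real.exp 1 := by
      rw [← Real.exp_add]; norm_num
    nlinarith [Real.exp_one_lt_d9, Real.exp_pos 1]
  rw [hrem]
  nlinarith [sq_nonneg ‖A‖, hbound]

end Aux

set_option maxHeartbeats 2000000 in
/-- The ∛n-Lemma: for a contraction `C` on a Banach space,
`‖Cⁿ - e^{n(C-1)}‖ ≤ (3/2) n^{1/3} ‖2(1-C)‖^{2/3}`. -/
theorem chernoff_cbrt_n_lemma {X : Type*} [NormedAddCommGroup X] [NormedSpace ℝ X]
    [CompleteSpace X] (C : X →L[ℝ] X) (hC : ‖C‖ ≤ 1) (n : ℕ) :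
    ‖C ^ n - exp ((n : ℝ) • (C - 1))‖
      ≤ 3 / 2 * (n : ℝ) ^ ((1 : ℝ) / 3) * ‖(2 : ℝ) • (1 - C)‖ ^ ((2 : ℝ) / 3) := by
  have hone : ‖(1 : X →L[ℝ] X)‖ ≤ 1 := by
    simpa [ContinuousLinearMap.one_def] using ContinuousLinearMap.norm_id_le (𝕜 := ℝ) (E := X)
  rcases Nat.eq_zero_or_pos n with hn | hn
  · subst hn
    simp [exp_zero, Real.zero_rpow (by norm_num : (1 : ℝ)/3 ≠ 0)]
  set T := exp (C - 1) with hT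
  have hTn : exp ((n : ℝ) • (C - 1)) = T ^ n := by
    let +nondep : NormedAlgebra ℚ (X →L[ℝ] X) := .restrictScalars ℚ ℝ (X →L[ℝ] X)
    rw [Nat.cast_smul_eq_nsmul ℝ n (C - 1), exp_nsmul]
  have hTle : ‖T‖ ≤ 1 := chernoff_aux_norm_exp_le C hC
  have hC21 : ‖C - 1‖ ≤ 2 := by
    calc ‖C - 1‖ ≤ ‖C‖ + ‖(1 : X →L[ℝ] X)‖ := norm_sub_le _ _
      _ ≤ 2 := by linarith
  have hsub : ‖C - T‖ ≤ 9 / 8 * ‖C - 1‖ ^ 2 := by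
    have heq : C - T = -(exp (C - 1) - 1 - (C - 1)) := by rw [hT]; abel
    rw [heq, norm_neg]
    exact chernoff_aux_exp_remainder (C - 1) hC21
  set m := ‖C - 1‖ with hm
  have hm0 : 0 ≤ m := norm_nonneg _
  have hb1 : ‖C ^ n - T ^ n‖ ≤ (n : ℝ) * (9 / 8 * m ^ 2) := by
    calc ‖C ^ n - T ^ n‖ ≤ (n : ℝ) * ‖C - T‖ := chernoff_aux_pow_sub_pow C T hC hTle n
      _ ≤ (n : ℝ) * (9 / 8 * m ^ 2) := by
          exact mul_le_mul_of_nonneg_left hsub (Nat.cast_nonneg n)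
  have hb2 : ‖C ^ n - T ^ n‖ ≤ 2 := by
    calc ‖C ^ n - T ^ n‖ ≤ ‖C ^ n‖ + ‖T ^ n‖ := norm_sub_le _ _
      _ ≤ 2 := by
          have := chernoff_aux_norm_pow_le C hC n
          have := chernoff_aux_norm_pow_le T hTle n
          linarith
  have hnorm2 : ‖(2 : ℝ) • (1 - C)‖ = 2 * m := by
    rw [norm_smul (2 : ℝ) (1 - C), Real.norm_ofNat, hm, norm_sub_rev]
  rw [hTn, hnorm2]
  set t : ℝ := (n : ℝ) * m ^ 2 with ht
  have ht0 : 0 ≤ t := by positivity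
  have hkey : 3 / 2 * (n : ℝ) ^ ((1 : ℝ) / 3) * (2 * m) ^ ((2 : ℝ) / 3)
      = 3 / 2 * (4 * t) ^ ((1 : ℝ) / 3) := by
    have h1 : (2 * m) ^ ((2 : ℝ) / 3) = ((2 * m) ^ 2) ^ ((1 : ℝ) / 3) := by
      rw [← Real.rpow_natCast (2 * m) 2, ← Real.rpow_mul (by positivity)]
      norm_num
    rw [h1, mul_assoc, ← Real.mul_rpow (Nat.cast_nonneg n) (by positivity)]
    congr 2
    rw [ht]; ring
  rw [hkey]
  -- cube root facts
  have hc4 : ((4 : ℝ) ^ ((1 : ℝ) / 3)) ^ 3 = 4 := by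
    rw [← Real.rpow_natCast ((4 : ℝ) ^ ((1 : ℝ) / 3)) 3, ← Real.rpow_mul (by norm_num)]
    norm_num
  have hc4' : (0 : ℝ) ≤ (4 : ℝ) ^ ((1 : ℝ) / 3) := Real.rpow_nonneg (by norm_num) _
  have hc43 : (4 : ℝ) / 3 ≤ (4 : ℝ) ^ ((1 : ℝ) / 3) := by
    nlinarith [sq_nonneg ((4 : ℝ) ^ ((1 : ℝ) / 3) - 4 / 3), sq_nonneg ((4 : ℝ) ^ ((1 : ℝ) / 3) + 4 / 3)]
  rcases le_or_gt t 1 with hcase | hcase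
  · -- use the quadratic bound
    refine le_trans hb1 ?_
    have hb1' : (n : ℝ) * (9 / 8 * m ^ 2) = 9 / 8 * t := by rw [ht]; ring
    rw [hb1']
    rcases eq_or_lt_of_le ht0 with h0 | h0
    · rw [← h0]
      simp [Real.zero_rpow (by norm_num : (1 : ℝ)/3 ≠ 0)]
    · have h1 : t ^ ((1 : ℝ)) ≤ t ^ ((1 : ℝ) / 3) :=
        Real.rpow_le_rpow_of_exponent_ge h0 hcase (by norm_num)
      rw [Real.rpow_one] at h1
      have h2 : (4 * t) ^ ((1 : ℝ) / 3) = 4 ^ ((1 : ℝ) / 3) * t ^ ((1 : ℝ) / 3) :=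
        Real.mul_rpow (by norm_num) ht0
      have h3 : (0 : ℝ) ≤ t ^ ((1 : ℝ) / 3) := Real.rpow_nonneg ht0 _
      rw [h2]
      nlinarith [mul_le_mul_of_nonneg_right hc43 h3, mul_le_mul_of_nonneg_left h1 (by norm_num : (0:ℝ) ≤ 4/3)]
  · -- use the trivial bound 2
    refine le_trans hb2 ?_
    have h4 : (4 : ℝ) ^ ((1 : ℝ) / 3) ≤ (4 * t) ^ ((1 : ℝ) / 3) :=
      Real.rpow_le_rpow (by norm_num) (by linarith) (by norm_num)
    linarith
end

section
/- Let A be an m-sectorial operator on a Hilbert space H with vertex at 0 and semi-angle α ∈ [0, π/4]. Then for every t > 0, the numerical range of F(t) = (I + tA)^{-1} satisfies W(F(t)) ⊆ S̄_α ∩ (1 - S̄_α) ⊆ D_α, where D_α = {z : |z| ≤ sin α} ∪ {z : |arg(1-z)| ≤ α and |z - 1| ≤ cos α}; in particular F(t) is a quasi-sectorial contraction. -/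
/-- The closed sector with vertex `0` and semi-angle `α`. -/
def closedSector (α : ℝ) : Set ℂ :=
  {z : ℂ | z = 0 ∨ |Complex.arg z| ≤ α}

/-- The domain `D_α` from the definition of quasi-sectorial contractions. -/
def chernoffDomain (α : ℝ) : Set ℂ :=
  {z : ℂ | ‖z‖ ≤ Real.sin α} ∪
    {z : ℂ | |Complex.arg (1 - z)| ≤ α ∧ ‖z - 1‖ ≤ Real.cos α}

/-- The numerical range of a bounded operator on a complex Hilbert space. -/
def numericalRange {H : Type*} [NormedAddCommGroup H] [InnerProductSpace ℂ H]
    (T : H →L[ℂ] H) : Set ℂ :=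
  {z : ℂ | ∃ x : H, ‖x‖ = 1 ∧ z = @inner ℂ H _ (T x) x}

private lemma le_of_sq_le_sq' {a b : ℝ} (hb : 0 ≤ b) (h : a ^ 2 ≤ b ^ 2) : a ≤ b := by
  nlinarith [sq_nonneg (a - b), sq_nonneg (a + b)]

/-- Membership in the closed sector in cartesian coordinates, for `0 ≤ α < π/2`. -/
private lemma mem_closedSector_iff {α : ℝ} (hα0 : 0 ≤ α) (hα : α < Real.pi / 2) {z : ℂ} :
    z ∈ closedSector α ↔ 0 ≤ z.re ∧ |z.im| ≤ Real.tan α * z.re := by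
  have hcosα : 0 < Real.cos α := Real.cos_pos_of_mem_Ioo ⟨by linarith [Real.pi_pos], hα⟩
  constructor
  · rintro (rfl | h)
    · simp
    by_cases hz : z = 0
    · simp [hz]
    set θ := Complex.arg z with hθdef
    have hθ2 : |θ| < Real.pi / 2 := lt_of_le_of_lt h hα
    have hθlt := abs_lt.mp hθ2
    have hcosθ : 0 < Real.cos θ := Real.cos_pos_of_mem_Ioo ⟨hθlt.1, hθlt.2⟩
    have hre := Complex.norm_mul_cos_arg z
    have him := Complex.norm_mul_sin_arg z
    have habs : (0:ℝ) ≤ ‖z‖ := norm_nonneg _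
    have key : |Real.sin θ| * Real.cos α ≤ Real.sin α * Real.cos θ := by
      have hsub : Real.sin (|θ| - α) ≤ 0 :=
        Real.sin_nonpos_of_nonpos_of_neg_pi_le (by linarith [abs_nonneg θ])
          (by linarith [abs_nonneg θ, Real.pi_pos])
      rw [Real.sin_sub] at hsub
      have h3 : |Real.sin θ| = Real.sin |θ| := by
        rcases le_or_gt 0 θ with hs | hs
        · rw [abs_of_nonneg hs, abs_of_nonneg (Real.sin_nonneg_of_nonneg_of_le_pi hs
            (by linarith [Real.pi_pos]))]
        · rw [abs_of_neg hs, abs_of_neg (Real.sin_neg_of_neg_of_neg_pi_lt hs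
            (by linarith [Real.pi_pos])), ← Real.sin_neg]
      have h4 : Real.cos |θ| = Real.cos θ := Real.cos_abs θ
      rw [h4] at hsub
      rw [h3]
      linarith
    constructor
    · rw [← hre]; exact mul_nonneg habs hcosθ.le
    · rw [← hre, ← him, Real.tan_eq_sin_div_cos, abs_mul, abs_of_nonneg habs,
        div_mul_eq_mul_div, le_div_iff₀ hcosα]
      nlinarith [mul_le_mul_of_nonneg_left key habs]
  · rintro ⟨h1, h2⟩
    by_cases hz : z = 0
    · exact Or.inl hz
    right
    have habs : (0:ℝ) < ‖z‖ := norm_pos_iff.mpr hz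
    have habs2 : (‖z‖) ^ 2 = z.re ^ 2 + z.im ^ 2 := by
      rw [Complex.sq_norm, Complex.normSq_apply]; ring
    have htan : 0 ≤ Real.tan α := Real.tan_nonneg_of_nonneg_of_le_pi_div_two hα0 hα.le
    -- |z.im| ≤ sin α * |z|
    have hkey : |z.im| ≤ Real.sin α * ‖z‖ := by
      have hsin : 0 ≤ Real.sin α := Real.sin_nonneg_of_nonneg_of_le_pi hα0
        (by linarith [Real.pi_pos])
      have hc : |z.im| * Real.cos α ≤ Real.sin α * z.re := by
        have := mul_le_mul_of_nonneg_right h2 hcosα.le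
        rw [Real.tan_eq_sin_div_cos] at this
        calc |z.im| * Real.cos α ≤ Real.sin α / Real.cos α * z.re * Real.cos α := this
          _ = Real.sin α * z.re := by field_simp
      apply le_of_sq_le_sq' (mul_nonneg hsin habs.le)
      have hsq : (|z.im| * Real.cos α) ^ 2 ≤ (Real.sin α * z.re) ^ 2 := by
        have h0 : 0 ≤ |z.im| * Real.cos α := mul_nonneg (abs_nonneg _) hcosα.le
        nlinarith [hc]
      have hsc := Real.sin_sq_add_cos_sq α
      nlinarith [sq_abs z.im, sq_nonneg z.im, hsq, habs2]
    rw [Complex.arg_of_re_nonneg h1]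
    have him1 : z.im / ‖z‖ ≤ Real.sin α := by
      rw [div_le_iff₀ habs]
      exact le_trans (le_abs_self _) hkey
    have him2 : -Real.sin α ≤ z.im / ‖z‖ := by
      rw [le_div_iff₀ habs]
      have := neg_abs_le z.im
      linarith [hkey]
    rw [abs_le]
    constructor
    · calc -α = -Real.arcsin (Real.sin α) := by
            rw [Real.arcsin_sin (by linarith [Real.pi_pos]) (by linarith)]
        _ = Real.arcsin (-Real.sin α) := (Real.arcsin_neg _).symm
        _ ≤ _ := Real.monotone_arcsin him2
    · calc Real.arcsin (z.im / ‖z‖) ≤ Real.arcsin (Real.sin α) :=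
            Real.monotone_arcsin him1
        _ = α := Real.arcsin_sin (by linarith [Real.pi_pos]) (by linarith)

set_option maxHeartbeats 1000000 in
/-- If `A` is m-sectorial with vertex `0` and semi-angle `α ∈ [0, π/4]`, then every
bounded inverse `F(t) = (1 + tA)⁻¹`, `t > 0`, satisfies
`W(F(t)) ⊆ S̄_α ∩ (1 - S̄_α) ⊆ D_α` and `‖F(t)‖ ≤ 1`, i.e. `F(t)` is a
quasi-sectorial contraction. -/
theorem resolvent_quasi_sectorial {H : Type*} [NormedAddCommGroup H]
    [InnerProductSpace ℂ H] [CompleteSpace H] (α : ℝ) (hα0 : 0 ≤ α) (hα : α ≤ Real.pi / 4)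
    (A : H →ₗ[ℂ] H)
    (hsect : ∀ x : H, ‖x‖ = 1 → |Complex.arg (@inner ℂ H _ (A x) x)| ≤ α)
    (t : ℝ) (ht : 0 < t) (B : H →L[ℂ] H)
    (hBl : (B : H →ₗ[ℂ] H) ∘ₗ (LinearMap.id + (t : ℂ) • A) = LinearMap.id)
    (hBr : (LinearMap.id + (t : ℂ) • A) ∘ₗ (B : H →ₗ[ℂ] H) = LinearMap.id) :
    numericalRange B ⊆ closedSector α ∩ ((fun w : ℂ => 1 - w) '' closedSector α) ∧
    closedSector α ∩ ((fun w : ℂ => 1 - w) '' closedSector α) ⊆ chernoffDomain α ∧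
    ‖B‖ ≤ 1 := by
  have hpi := Real.pi_pos
  have hαlt : α < Real.pi / 2 := by linarith
  have hcosα : 0 < Real.cos α := Real.cos_pos_of_mem_Ioo ⟨by linarith, hαlt⟩
  have hsinα : 0 ≤ Real.sin α := Real.sin_nonneg_of_nonneg_of_le_pi hα0 (by linarith)
  have htan0 : 0 ≤ Real.tan α := Real.tan_nonneg_of_nonneg_of_le_pi_div_two hα0 hαlt.le
  have htan1 : Real.tan α ≤ 1 := by
    rw [← Real.tan_pi_div_four]
    rcases eq_or_lt_of_le hα with h | h
    · rw [h]
    · exact (Real.tan_lt_tan_of_nonneg_of_lt_pi_div_two hα0 (by linarith) h).le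
  -- key sectoriality fact: the inner product ⟪A y, y⟫ lies in the sector, for all y
  have hWA : ∀ y : H, (@inner ℂ H _ (A y) y) ∈ closedSector α := by
    intro y
    by_cases hy : y = 0
    · subst hy; left; simp
    · right
      have hny : (0:ℝ) < ‖y‖ := norm_pos_iff.mpr hy
      set u : H := ((‖y‖ : ℂ))⁻¹ • y with hu
      have hnu : ‖u‖ = 1 := by
        rw [hu, norm_smul]
        simp [norm_inv, hny.ne']
      have harg := hsect u hnu
      have hne : ((‖y‖ : ℝ) : ℂ) ≠ 0 := by exact_mod_cast hny.ne'
      have hrew : ((‖y‖ ^ 2 : ℝ) : ℂ) * (@inner ℂ H _ (A u) u) = @inner ℂ H _ (A y) y := by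
        rw [hu, map_smul, inner_smul_left, inner_smul_right, map_inv₀, Complex.conj_ofReal]
        push_cast
        field_simp
      rw [← hrew, Complex.arg_real_mul _ (by positivity)]
      exact harg
  -- the basic identity satisfied by y = B x
  have hid : ∀ x : H, B x + (t : ℂ) • A (B x) = x := by
    intro x
    have := LinearMap.ext_iff.mp hBr x
    simpa [LinearMap.comp_apply, LinearMap.add_apply, LinearMap.smul_apply] using this
  -- the norm identity
  have hnormid : ∀ x : H, ‖x‖ ^ 2 = ‖B x‖ ^ 2
      + 2 * (t * (@inner ℂ H _ (A (B x)) (B x)).re) + t ^ 2 * ‖A (B x)‖ ^ 2 := by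
    intro x
    set y := B x with hy
    have hx : x = y + (t : ℂ) • A y := (hid x).symm
    rw [hx, @norm_add_sq ℂ _ _ _ _ y ((t : ℂ) • A y)]
    rw [inner_smul_right, norm_smul]
    simp only [RCLike.re_to_complex, Complex.mul_re, Complex.ofReal_re, Complex.ofReal_im]
    have hre : (@inner ℂ H _ y (A y)).re = (@inner ℂ H _ (A y) y).re := by
      rw [← inner_conj_symm y (A y)]
      exact Complex.conj_re _
    rw [hre]
    have : ‖(t:ℂ)‖ = t := by
      simp [Complex.norm_real, abs_of_pos ht]
    rw [this]
    ring
  have hrepos : ∀ y : H, 0 ≤ (@inner ℂ H _ (A y) y).re := by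
    intro y
    exact ((mem_closedSector_iff hα0 hαlt).mp (hWA y)).1
  refine ⟨?_, ?_, ?_⟩
  · -- numerical range inclusion
    rintro z ⟨x, hx1, rfl⟩
    set y := B x with hy
    set w : ℂ := @inner ℂ H _ (A y) y with hw
    have hwre : 0 ≤ w.re := hrepos y
    have hwim : |w.im| ≤ Real.tan α * w.re := ((mem_closedSector_iff hα0 hαlt).mp (hWA y)).2
    have hx2 : x = y + (t : ℂ) • A y := (hid x).symm
    have hz_eq : @inner ℂ H _ (B x) x = ((‖y‖ ^ 2 : ℝ) : ℂ) + (t : ℂ) * (starRingEnd ℂ) w := by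
      rw [hw]
      have hself : @inner ℂ H _ y y = ((‖y‖ ^ 2 : ℝ) : ℂ) := by
        rw [inner_self_eq_norm_sq_to_K]; norm_num
      have h1 : @inner ℂ H _ (B x) x = @inner ℂ H _ y (y + (t : ℂ) • A y) := by rw [← hx2]
      rw [h1, inner_add_right, inner_smul_right, hself, ← inner_conj_symm y (A y)]
    have hzre : (@inner ℂ H _ (B x) x).re = ‖y‖ ^ 2 + t * w.re := by
      rw [hz_eq]
      simp only [Complex.add_re, Complex.mul_re, Complex.ofReal_re, Complex.ofReal_im,
        Complex.conj_re, Complex.conj_im]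
      ring
    have hzim : (@inner ℂ H _ (B x) x).im = -(t * w.im) := by
      rw [hz_eq]
      simp only [Complex.add_im, Complex.mul_im, Complex.ofReal_re, Complex.ofReal_im,
        Complex.conj_re, Complex.conj_im]
      ring
    have hnrm := hnormid x
    rw [hx1, ← hy, ← hw, one_pow] at hnrm
    constructor
    · rw [mem_closedSector_iff hα0 hαlt, hzre, hzim]
      constructor
      · positivity
      · rw [abs_neg, abs_mul, abs_of_pos ht]
        calc t * |w.im| ≤ t * (Real.tan α * w.re) :=
              mul_le_mul_of_nonneg_left hwim ht.le
          _ ≤ Real.tan α * (‖y‖ ^ 2 + t * w.re) := by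
              nlinarith [mul_nonneg htan0 (sq_nonneg ‖y‖)]
    · refine ⟨1 - @inner ℂ H _ (B x) x, ?_, by ring⟩
      rw [mem_closedSector_iff hα0 hαlt]
      have hre1 : (1 - @inner ℂ H _ (B x) x).re = t * w.re + t ^ 2 * ‖A y‖ ^ 2 := by
        simp only [Complex.sub_re, Complex.one_re, hzre]
        linarith [hnrm]
      have him1 : (1 - @inner ℂ H _ (B x) x).im = t * w.im := by
        simp [Complex.sub_im, hzim]
      rw [hre1, him1]
      constructor
      · positivity
      · rw [abs_mul, abs_of_pos ht]
        calc t * |w.im| ≤ t * (Real.tan α * w.re) :=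
              mul_le_mul_of_nonneg_left hwim ht.le
          _ ≤ Real.tan α * (t * w.re + t ^ 2 * ‖A y‖ ^ 2) := by
              nlinarith [mul_nonneg (mul_nonneg htan0 (sq_nonneg t)) (sq_nonneg ‖A y‖)]
  · -- geometric inclusion into the Chernoff domain
    rintro z ⟨hz1, v, hv, hvz⟩
    have hv1 : (1 : ℂ) - z ∈ closedSector α := by
      have : v = 1 - z := by rw [← hvz]; ring
      rwa [this] at hv
    obtain ⟨ha0, hb1⟩ := (mem_closedSector_iff hα0 hαlt).mp hz1
    obtain ⟨ha1', hb2'⟩ := (mem_closedSector_iff hα0 hαlt).mp hv1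
    set a := z.re with hadef
    set b := z.im with hbdef
    have hre' : ((1:ℂ) - z).re = 1 - a := by simp [Complex.sub_re, hadef]
    have him' : ((1:ℂ) - z).im = -b := by simp [Complex.sub_im, hbdef]
    rw [hre'] at ha1' hb2'
    rw [him', abs_neg] at hb2'
    have habz : (‖z‖) ^ 2 = a ^ 2 + b ^ 2 := by
      rw [Complex.sq_norm, Complex.normSq_apply]; ring
    have habz1 : (‖z - 1‖) ^ 2 = (1 - a) ^ 2 + b ^ 2 := by
      rw [Complex.sq_norm, Complex.normSq_apply]
      simp [Complex.sub_re, Complex.sub_im]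
      ring
    have key : ‖z‖ ≤ Real.sin α ∨ ‖z - 1‖ ≤ Real.cos α := by
      have hbb : b ^ 2 ≤ a * (1 - a) := by
        have hmm := mul_le_mul hb1 hb2' (abs_nonneg b) (mul_nonneg htan0 ha0)
        have htansq : Real.tan α * Real.tan α ≤ 1 := by nlinarith
        nlinarith [abs_mul_abs_self b, mul_nonneg ha0 ha1', htansq, htan0, hmm]
      by_contra hcon
      push_neg at hcon
      obtain ⟨hc1, hc2⟩ := hcon
      have h1 : Real.sin α ^ 2 < (‖z‖) ^ 2 :=
        pow_lt_pow_left₀ hc1 hsinα two_ne_zero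
      have h2 : Real.cos α ^ 2 < (‖z - 1‖) ^ 2 :=
        pow_lt_pow_left₀ hc2 hcosα.le two_ne_zero
      nlinarith [Real.sin_sq_add_cos_sq α, habz, habz1, hbb]
    rcases key with h | h
    · exact Or.inl h
    · refine Or.inr ⟨?_, h⟩
      rcases hv1 with h0 | h0
      · rw [h0]; simpa [Complex.arg_zero] using hα0
      · exact h0
  · -- contraction
    apply ContinuousLinearMap.opNorm_le_bound _ zero_le_one
    intro x
    rw [one_mul]
    have h := hnormid x
    have h2 : ‖B x‖ ^ 2 ≤ ‖x‖ ^ 2 := by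
      nlinarith [hrepos (B x), sq_nonneg ‖A (B x)‖, ht.le, sq_nonneg t]
    exact le_of_sq_le_sq' (norm_nonneg x) h2
end

section
/- For α ∈ [0, π/4], the set S̄_α ∩ (1 - S̄_α) is contained in the domain D_α = {z ∈ ℂ : |z| ≤ sin α} ∪ {z ∈ ℂ : |arg(1-z)| ≤ α and |z - 1| ≤ cos α}, where S̄_α is the closed sector of semi-angle α with vertex at 0. -/
open Real Complex

lemma sector_bound (α : ℝ) (hα2 : α < π/2) (z : ℂ) (hz : z ≠ 0)
    (h : |Complex.arg z| ≤ α) : 0 < z.re ∧ |z.im| ≤ z.re * Real.tan α := by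
  have hlt : |Complex.arg z| < π/2 := lt_of_le_of_lt h hα2
  have hre : 0 < z.re := by
    rcases Complex.abs_arg_lt_pi_div_two_iff.mp hlt with h' | h'
    · exact h'
    · exact absurd h' hz
  refine ⟨hre, ?_⟩
  have hmem : Complex.arg z ∈ Set.Ioo (-(π/2)) (π/2) := by
    constructor <;> [exact neg_lt_of_abs_lt hlt; exact lt_of_abs_lt hlt]
  have hαmem : α ∈ Set.Ioo (-(π/2)) (π/2) := by
    constructor
    · linarith [abs_nonneg (Complex.arg z)]
    · exact hα2
  have hnαmem : -α ∈ Set.Ioo (-(π/2)) (π/2) := by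
    constructor
    · simpa using hα2
    · nlinarith [abs_nonneg (Complex.arg z)]
  have h1 : Real.tan (Complex.arg z) ≤ Real.tan α :=
    Real.strictMonoOn_tan.monotoneOn hmem hαmem (le_of_abs_le h)
  have h2 : Real.tan (-α) ≤ Real.tan (Complex.arg z) :=
    Real.strictMonoOn_tan.monotoneOn hnαmem hmem (neg_le_of_abs_le h)
  rw [Real.tan_neg] at h2
  have habs : |z.im / z.re| ≤ Real.tan α := by
    rw [abs_le]; rw [Complex.tan_arg] at h1 h2; exact ⟨h2, h1⟩
  rw [abs_div, abs_of_pos hre, div_le_iff₀ hre] at habs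
  linarith [habs]

set_option maxHeartbeats 1600000

/-- Geometric inclusion: for `α ∈ [0, π/4]`, `S̄_α ∩ (1 - S̄_α) ⊆ D_α`. -/
theorem sector_inter_subset_chernoffDomain (α : ℝ) (hα0 : 0 ≤ α) (hα : α ≤ Real.pi / 4) :
    closedSector α ∩ ((fun w : ℂ => 1 - w) '' closedSector α) ⊆ chernoffDomain α := by
  have hpi : (0:ℝ) < π := Real.pi_pos
  have hα2 : α < π/2 := by linarith
  have hsin0 : 0 ≤ Real.sin α := Real.sin_nonneg_of_nonneg_of_le_pi hα0 (by linarith)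
  have hcos0 : 0 < Real.cos α := Real.cos_pos_of_mem_Ioo ⟨by linarith, hα2⟩
  rintro z ⟨hz1, w, hw, hwz⟩
  simp only [closedSector, Set.mem_setOf_eq] at hz1 hw
  simp only [chernoffDomain, Set.mem_union, Set.mem_setOf_eq]
  have hw' : w = 1 - z := by rw [← hwz]; ring
  subst hw'
  rcases hz1 with rfl | hz1
  · left; simpa using hsin0
  rcases hw with hw0 | hw
  · right
    have hz1' : z = 1 := by
      have := sub_eq_zero.mp hw0; exact this.symm
    subst hz1'
    constructor
    · simp [Complex.arg_zero, hα0]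
    · simp [hcos0.le]
  -- main case
  by_cases hzne : z = 0
  · subst hzne; left; simpa using hsin0
  by_cases hwne : (1:ℂ) - z = 0
  · right
    have hz1' : z = 1 := (sub_eq_zero.mp hwne).symm
    subst hz1'
    exact ⟨by simp [Complex.arg_zero, hα0], by simp [hcos0.le]⟩
  obtain ⟨hx, hy⟩ := sector_bound α hα2 z hzne hz1
  obtain ⟨hx', hy'⟩ := sector_bound α hα2 (1 - z) hwne hw
  by_cases hC : ‖z - 1‖ ≤ Real.cos α
  · exact Or.inr ⟨hw, hC⟩
  left
  push_neg at hC
  set x := z.re with hxdef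
  set y := z.im with hydef
  have hre1 : (1 - z : ℂ).re = 1 - x := by simp [Complex.sub_re, hxdef]
  have him1 : (1 - z : ℂ).im = -y := by simp [Complex.sub_im, hydef]
  rw [hre1] at hx' hy'
  rw [him1, abs_neg] at hy'
  set t := Real.tan α with htdef
  have ht1 : t ≤ 1 := by
    rw [htdef, ← Real.tan_pi_div_four]
    exact Real.strictMonoOn_tan.monotoneOn ⟨by linarith, hα2⟩
      ⟨by linarith, by linarith⟩ hα
  have hs : t * Real.cos α = Real.sin α := by
    rw [htdef, Real.tan_eq_sin_div_cos]; field_simp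
  have ht0 : 0 ≤ t := by
    have := div_nonneg hsin0 hcos0.le
    rw [htdef, Real.tan_eq_sin_div_cos]; exact this
  have pyth := Real.sin_sq_add_cos_sq α
  have hone : (1 + t ^ 2) * Real.cos α ^ 2 = 1 := by
    rw [htdef, Real.tan_eq_sin_div_cos]
    field_simp
    linarith [pyth]
  have hy2 : y ^ 2 ≤ x ^ 2 * t ^ 2 := by
    have h0 := mul_self_le_mul_self (abs_nonneg y) hy
    nlinarith [_root_.sq_abs y]
  have hy2' : y ^ 2 ≤ (1 - x) ^ 2 * t ^ 2 := by
    have h0 := mul_self_le_mul_self (abs_nonneg y) hy'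
    nlinarith [_root_.sq_abs y]
  have habs1 : ‖z - 1‖ ^ 2 = (x - 1) ^ 2 + y ^ 2 := by
    rw [Complex.sq_norm, Complex.normSq_apply]
    simp [Complex.sub_re, Complex.sub_im]; ring
  have hC2 : Real.cos α ^ 2 < (x - 1) ^ 2 + y ^ 2 := by
    have h2 : Real.cos α ^ 2 < ‖z - 1‖ ^ 2 :=
      pow_lt_pow_left₀ hC hcos0.le two_ne_zero
    rw [habs1] at h2; exact h2
  have e1 : Real.cos α ^ 2 < (1 - x) ^ 2 * (1 + t ^ 2) := by nlinarith [hy2', hC2]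
  have e2 : (Real.cos α ^ 2) ^ 2 < (1 - x) ^ 2 := by
    have e1' : Real.cos α ^ 2 * Real.cos α ^ 2 < (1 - x) ^ 2 * (1 + t ^ 2) * Real.cos α ^ 2 :=
      mul_lt_mul_of_pos_right e1 (by positivity)
    calc (Real.cos α ^ 2) ^ 2 = Real.cos α ^ 2 * Real.cos α ^ 2 := by ring
      _ < (1 - x) ^ 2 * (1 + t ^ 2) * Real.cos α ^ 2 := e1'
      _ = (1 - x) ^ 2 := by rw [mul_assoc, hone, mul_one]
  have e3 : Real.cos α ^ 2 < 1 - x := lt_of_pow_lt_pow_left₀ 2 hx'.le e2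
  have e4 : x < Real.sin α ^ 2 := by linarith [pyth]
  have e5 : Real.sin α ≤ Real.cos α := by
    have h5 : (1 - t) * Real.cos α ≥ 0 := mul_nonneg (by linarith) hcos0.le
    nlinarith [hs]
  have hs2 : Real.sin α ^ 2 > 0 := lt_trans hx e4
  have k1 : (x ^ 2 + y ^ 2) * Real.cos α ^ 2 ≤ x ^ 2 * (1 + t ^ 2) * Real.cos α ^ 2 :=
    mul_le_mul_of_nonneg_right (by nlinarith [hy2]) (by positivity)
  have k2 : x ^ 2 * (1 + t ^ 2) * Real.cos α ^ 2 = x ^ 2 := by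
    rw [mul_assoc, hone, mul_one]
  have k3 : x ^ 2 < Real.sin α ^ 2 * Real.sin α ^ 2 := by
    have := mul_self_lt_mul_self hx.le e4
    nlinarith [this]
  have k4 : Real.sin α ^ 2 * Real.sin α ^ 2 ≤ Real.sin α ^ 2 * Real.cos α ^ 2 :=
    mul_le_mul_of_nonneg_left (by nlinarith [e5, hsin0]) (by positivity)
  have key : x ^ 2 + y ^ 2 ≤ Real.sin α ^ 2 := by
    have hlt : (x ^ 2 + y ^ 2) * Real.cos α ^ 2 < Real.sin α ^ 2 * Real.cos α ^ 2 := by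
      calc (x ^ 2 + y ^ 2) * Real.cos α ^ 2 ≤ x ^ 2 * (1 + t ^ 2) * Real.cos α ^ 2 := k1
        _ = x ^ 2 := k2
        _ < Real.sin α ^ 2 * Real.sin α ^ 2 := k3
        _ ≤ Real.sin α ^ 2 * Real.cos α ^ 2 := k4
    have := lt_of_mul_lt_mul_right hlt (by positivity : (0:ℝ) ≤ Real.cos α ^ 2)
    linarith
  have habsz : ‖z‖ ^ 2 = x ^ 2 + y ^ 2 := by
    rw [Complex.sq_norm, Complex.normSq_apply]; ring
  calc ‖z‖ = Real.sqrt (‖z‖ ^ 2) :=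
        (Real.sqrt_sq (norm_nonneg z)).symm
    _ ≤ Real.sqrt (Real.sin α ^ 2) := Real.sqrt_le_sqrt (by rw [habsz]; exact key)
    _ = Real.sin α := Real.sqrt_sq hsin0
end

section
/- For 0 < β < π/2 and s ∈ [0, cos β], one has (1 - s cos β)² + s²(sin β)² ≤ 1 - s cos β, and consequently ∫₀^{cos β} ((1 - s cos β)² + s² sin²β)^{n/2} ds ≤ (1 - (sin β)^{n+2})/((n/2 + 1) cos β) for every n ∈ ℕ. -/
/-- Elementary inequality and integral estimate: for `0 < β < π/2`,
`(1 - s cos β)² + s² sin²β ≤ 1 - s cos β` on `[0, cos β]`, and hence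
`∫₀^{cos β} ((1-s cos β)² + s² sin²β)^{n/2} ds ≤ (1 - (sin β)^{n+2})/((n/2+1) cos β)`. -/
theorem convexity_integral_estimate (β : ℝ) (hβ0 : 0 < β) (hβ : β < Real.pi / 2) :
    (∀ s ∈ Set.Icc (0 : ℝ) (Real.cos β),
      (1 - s * Real.cos β) ^ 2 + s ^ 2 * Real.sin β ^ 2 ≤ 1 - s * Real.cos β) ∧
    ∀ n : ℕ,
      (∫ s in (0 : ℝ)..Real.cos β,
          ((1 - s * Real.cos β) ^ 2 + s ^ 2 * Real.sin β ^ 2) ^ ((n : ℝ) / 2))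
        ≤ (1 - Real.sin β ^ (n + 2)) / (((n : ℝ) / 2 + 1) * Real.cos β) := by
  have pyth := Real.sin_sq_add_cos_sq β
  have hc : 0 < Real.cos β := Real.cos_pos_of_mem_Ioo
    ⟨by linarith [Real.pi_pos], hβ⟩
  have hsin : 0 < Real.sin β := Real.sin_pos_of_pos_of_lt_pi hβ0
    (by linarith [Real.pi_pos])
  have hc1 : Real.cos β < 1 := by
    nlinarith [Real.cos_le_one β, Real.neg_one_le_cos β]
  set c := Real.cos β with hcdef
  have key : ∀ s ∈ Set.Icc (0 : ℝ) c,
      (1 - s * c) ^ 2 + s ^ 2 * Real.sin β ^ 2 ≤ 1 - s * c := by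
    intro s hs
    obtain ⟨hs0, hsc⟩ := hs
    nlinarith
  refine ⟨key, fun n => ?_⟩
  set r : ℝ := (n : ℝ) / 2 with hrdef
  have hr0 : 0 ≤ r := by positivity
  have hr1 : 0 < r + 1 := by positivity
  -- positivity of the base on [0, c]
  have hbase : ∀ s ∈ Set.Icc (0 : ℝ) c,
      0 < (1 - s * c) ^ 2 + s ^ 2 * Real.sin β ^ 2 := by
    intro s hs
    obtain ⟨hs0, hsc⟩ := hs
    nlinarith
  have hlin : ∀ s ∈ Set.Icc (0 : ℝ) c, 0 < 1 - s * c := by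
    intro s hs
    obtain ⟨hs0, hsc⟩ := hs
    nlinarith
  -- continuity / integrability
  have hcontf : ContinuousOn
      (fun s : ℝ => ((1 - s * c) ^ 2 + s ^ 2 * Real.sin β ^ 2) ^ r)
      (Set.Icc 0 c) := by
    apply ContinuousOn.rpow_const
    · fun_prop
    · intro x hx
      exact Or.inl (ne_of_gt (hbase x hx))
  have hcontg : ContinuousOn (fun s : ℝ => (1 - s * c) ^ r) (Set.Icc 0 c) := by
    apply ContinuousOn.rpow_const
    · fun_prop
    · intro x hx
      exact Or.inl (ne_of_gt (hlin x hx))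
  have huIcc : Set.uIcc (0 : ℝ) c = Set.Icc 0 c := Set.uIcc_of_le hc.le
  have hintf : IntervalIntegrable
      (fun s : ℝ => ((1 - s * c) ^ 2 + s ^ 2 * Real.sin β ^ 2) ^ r)
      MeasureTheory.volume 0 c :=
    (hcontf.mono (le_of_eq huIcc)).intervalIntegrable
  have hintg : IntervalIntegrable (fun s : ℝ => (1 - s * c) ^ r)
      MeasureTheory.volume 0 c :=
    (hcontg.mono (le_of_eq huIcc)).intervalIntegrable
  -- comparison of integrands
  have hmono : (∫ s in (0 : ℝ)..c,
      ((1 - s * c) ^ 2 + s ^ 2 * Real.sin β ^ 2) ^ r)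
      ≤ ∫ s in (0 : ℝ)..c, (1 - s * c) ^ r := by
    apply intervalIntegral.integral_mono_on hc.le hintf hintg
    intro s hs
    exact Real.rpow_le_rpow (hbase s hs).le (key s hs) hr0
  -- exact value of the comparison integral
  have hFderiv : ∀ s ∈ Set.uIcc (0 : ℝ) c,
      HasDerivAt (fun t : ℝ => -(1 - t * c) ^ (r + 1) / ((r + 1) * c))
        ((1 - s * c) ^ r) s := by
    intro s hs
    rw [huIcc] at hs
    have hu : HasDerivAt (fun t : ℝ => 1 - t * c) (-c) s := by
      simpa using ((hasDerivAt_id s).mul_const c).const_sub (1 : ℝ)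
    have hpow := (Real.hasDerivAt_rpow_const
      (x := 1 - s * c) (p := r + 1) (Or.inl (ne_of_gt (hlin s hs)))).comp s hu
    have : HasDerivAt (fun t : ℝ => -(1 - t * c) ^ (r + 1) / ((r + 1) * c)) _ s :=
      (hpow.neg).div_const ((r + 1) * c)
    convert this using 1
    rw [add_sub_cancel_right, eq_div_iff (mul_pos hr1 hc).ne']
    ring
  have hval : (∫ s in (0 : ℝ)..c, (1 - s * c) ^ r)
      = (1 - Real.sin β ^ (n + 2)) / ((r + 1) * c) := by
    rw [intervalIntegral.integral_eq_sub_of_hasDerivAt hFderiv hintg]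
    have h1c : (1 : ℝ) - c * c = Real.sin β ^ 2 := by nlinarith
    have hsq : ((Real.sin β ^ 2 : ℝ)) ^ (r + 1) = Real.sin β ^ (n + 2) := by
      rw [← Real.rpow_natCast (Real.sin β) 2, ← Real.rpow_mul hsin.le,
        ← Real.rpow_natCast (Real.sin β) (n + 2)]
      congr 1
      push_cast [hrdef]
      ring
    simp only [h1c, hsq, zero_mul, sub_zero, one_mul, Real.one_rpow]
    field_simp
    ring
  calc (∫ s in (0 : ℝ)..c,
      ((1 - s * c) ^ 2 + s ^ 2 * Real.sin β ^ 2) ^ r)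
      ≤ ∫ s in (0 : ℝ)..c, (1 - s * c) ^ r := hmono
    _ = (1 - Real.sin β ^ (n + 2)) / ((r + 1) * c) := hval
end

section
/- For every n ∈ ℕ and λ ∈ [0, 1], one has |λⁿ - e^{n(λ - 1)}| ≤ e^{-1}/n. -/
open Real Set

/-- Scalar Chernoff estimate: for every `n ≥ 1` and `λ ∈ [0,1]`,
`|λⁿ - e^{n(λ-1)}| ≤ e⁻¹/n`. -/
theorem scalar_chernoff_estimate (n : ℕ) (hn : 1 ≤ n) (l : ℝ) (hl : l ∈ Set.Icc (0 : ℝ) 1) :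
    |l ^ n - Real.exp (n * (l - 1))| ≤ Real.exp (-1) / n := by
  have hnR : (0:ℝ) < n := by exact_mod_cast hn
  set g : ℝ → ℝ := fun x => Real.exp (n * (x - 1)) - x ^ n with hg
  -- pow ≤ exp on [0,1]
  have hle : ∀ x ∈ Set.Icc (0:ℝ) 1, x ^ n ≤ Real.exp (n * (x - 1)) := by
    intro x hx
    have h1 : x ≤ Real.exp (x - 1) := by
      have := Real.add_one_le_exp (x - 1); linarith
    calc x ^ n ≤ (Real.exp (x - 1)) ^ n :=
          pow_le_pow_left₀ hx.1 h1 n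
      _ = Real.exp (n * (x - 1)) := by rw [← Real.exp_nat_mul]
  -- key scalar bound
  have key : ∀ s : ℝ, s * Real.exp (-s) ≤ Real.exp (-1) := by
    intro s
    have h := Real.add_one_le_exp (s - 1)
    calc s * Real.exp (-s) ≤ Real.exp (s-1) * Real.exp (-s) :=
        mul_le_mul_of_nonneg_right (by linarith) (Real.exp_nonneg _)
      _ = Real.exp (-1) := by rw [← Real.exp_add]; ring_nf
  -- derivative of g
  have hderiv : ∀ x : ℝ, HasDerivAt g (n * Real.exp (n * (x - 1)) - n * x ^ (n-1)) x := by
    intro x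
    have h1 : HasDerivAt (fun y : ℝ => (n:ℝ) * (y - 1)) n x := by
      simpa using ((hasDerivAt_id x).sub_const 1).const_mul (n:ℝ)
    have h2 : HasDerivAt (fun y : ℝ => Real.exp (n * (y - 1)))
        (Real.exp (n * (x - 1)) * n) x := (Real.hasDerivAt_exp _).comp x h1
    have h3 : HasDerivAt (fun y : ℝ => y ^ n) ((n:ℝ) * x ^ (n-1)) x := hasDerivAt_pow n x
    exact (h2.sub h3).congr_deriv (by ring)
  -- maximum exists
  obtain ⟨c, hc, hmax⟩ := isCompact_Icc.exists_isMaxOn (Set.nonempty_Icc.2 zero_le_one)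
    (Continuous.continuousOn (by continuity : Continuous g))
  have hgoal : g c ≤ Real.exp (-1) / n := by
    rcases eq_or_lt_of_le hc.1 with h0 | h0
    · -- c = 0
      have hceq : c = 0 := h0.symm
      have heq : g c = Real.exp (-(n:ℝ)) := by
        simp only [hg, hceq, zero_pow (by omega : n ≠ 0), sub_zero, zero_sub,
          mul_neg_one]
      rw [heq]
      rw [div_eq_inv_mul, ← mul_le_mul_iff_right₀ hnR]
      calc (n:ℝ) * Real.exp (-(n:ℝ)) ≤ Real.exp (-1) := key n
        _ = (n:ℝ) * ((n:ℝ)⁻¹ * Real.exp (-1)) := by field_simp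
    rcases eq_or_lt_of_le hc.2 with h1 | h1
    · -- c = 1
      have : g c = 0 := by simp [hg, h1]
      rw [this]; positivity
    · -- interior critical point
      have hloc : IsLocalMax g c := by
        apply hmax.isLocalMax
        exact Icc_mem_nhds h0 h1
      have hd0 := hloc.hasDerivAt_eq_zero (hderiv c)
      have hcrit : Real.exp (n * (c - 1)) = c ^ (n-1) := by
        have : (n:ℝ) * Real.exp (n * (c - 1)) = n * c ^ (n-1) := by linarith
        exact mul_left_cancel₀ (ne_of_gt hnR) this
      have hcn : c ^ n = c * c ^ (n-1) := by
        conv_lhs => rw [show n = 1 + (n-1) by omega]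
        rw [pow_add, pow_one]
      have hgc : g c = (1 - c) * Real.exp (n * (c - 1)) := by
        rw [hg]; simp only []
        rw [hcn, hcrit]; ring
      rw [hgc]
      have : (1 - c) * Real.exp (n * (c - 1))
          = ((n:ℝ) * (1 - c)) * Real.exp (-((n:ℝ)*(1-c))) / n := by
        field_simp
        ring_nf
      rw [this]
      exact div_le_div_of_nonneg_right (key _) hnR.le
  -- conclude
  have h1 := hle l hl
  have h2 : |l ^ n - Real.exp (n * (l - 1))| = g l := by
    rw [abs_sub_comm, abs_of_nonneg (by simpa [hg] using sub_nonneg.2 h1)]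
  rw [h2]
  exact (hmax hl).trans hgoal
end
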